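/- Let ρ > 0, let n ≥ 1 be a natural number, and let δ ≥ 0 (the deck-load ratio δ = 2ⁿ g m_d/F). The function μ_Y(β) = (1/2)(1 − 2^{-n})(1 + δ)·[(1 + tan²β)/tan β + ρ tan β], defined for β ∈ (0, π/2), attains its unique global minimum at β*_Y = arctan(1/√(1+ρ)), and the minimum value is (1 − 2^{-n})(1 + δ)·√(1+ρ). The minimizing angle depends neither on n nor on δ. -/

import Mathlib

/-! The load factor `½(1 - 2⁻ⁿ)(1 + δ)` is a positive constant, and with `t = tan β` the bracket
equals `1/t + (1 + ρ) t`. By AM–GM, `1/t + c t - 2√c = (√c t - 1)² / t`, so on `t > 0` the bracket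
is at least `2√(1 + ρ)`, with equality only at `t = 1/√(1 + ρ)`; since `tan` is injective on
`(0, π/2)`, this `t` corresponds to the single angle `arctan (1/√(1 + ρ))`. -/

open Real

lemma arctan_mem_Ioo_zero_pi_div_two {x : ℝ} (hx : 0 < x) : arctan x ∈ Set.Ioo 0 (π / 2) :=
  ⟨by simpa using arctan_strictMono hx, arctan_lt_pi_div_two x⟩

lemma one_sub_two_rpow_neg_pos {n : ℕ} (hn : 1 ≤ n) : 0 < 1 - (2 : ℝ) ^ (-(n : ℝ)) := by
  have hn' : (0 : ℝ) < n := by exact_mod_cast hn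
  linarith [rpow_lt_one_of_one_lt_of_neg one_lt_two (neg_neg_of_pos hn')]

lemma one_add_sq_div_self (t : ℝ) : (1 + t ^ 2) / t = t⁻¹ + t := by
  rcases eq_or_ne t 0 with rfl | ht
  · simp
  · field_simp

lemma inv_add_mul_inv_sqrt {c : ℝ} (hc : 0 < c) : (√c)⁻¹⁻¹ + c * (√c)⁻¹ = 2 * √c := by
  field_simp
  rw [sq_sqrt hc.le]
  ring

lemma two_sqrt_lt_inv_add_mul {c t : ℝ} (hc : 0 < c) (ht : 0 < t) (hne : t ≠ (√c)⁻¹) :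
    2 * √c < t⁻¹ + c * t := by
  have hsq : 0 < (√c * t - 1) ^ 2 := by
    refine even_two.pow_pos fun h => hne ?_
    field_simp
    linarith
  have key : t⁻¹ + c * t - 2 * √c = (√c * t - 1) ^ 2 / t := by
    field_simp
    linear_combination -t ^ 2 * sq_sqrt hc.le
  linarith [div_pos hsq ht]

lemma two_sqrt_lt_inv_tan_add_mul_tan {c β : ℝ} (hc : 0 < c) (hβ : β ∈ Set.Ioo 0 (π / 2))
    (hne : β ≠ arctan (√c)⁻¹) : 2 * √c < (tan β)⁻¹ + c * tan β := by
  refine two_sqrt_lt_inv_add_mul hc (tan_pos_of_pos_of_lt_pi_div_two hβ.1 hβ.2) fun h => hne ?_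
  rw [← h, arctan_tan (by linarith [hβ.1, pi_pos]) hβ.2]

theorem substructure_with_deck_yield_optimum (ρ : ℝ) (hρ : 0 < ρ)
    (n : ℕ) (hn : 1 ≤ n) (δ : ℝ) (hδ : 0 ≤ δ)
    (μY : ℝ → ℝ)
    (hμY : ∀ β, μY β = 1 / 2 * (1 - (2 : ℝ) ^ (-(n : ℝ))) * (1 + δ) *
        ((1 + Real.tan β ^ 2) / Real.tan β + ρ * Real.tan β))
    (βY : ℝ) (hβY : βY = Real.arctan (1 / Real.sqrt (1 + ρ))) :
    βY ∈ Set.Ioo 0 (π / 2) ∧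
    (∀ β ∈ Set.Ioo 0 (π / 2), β ≠ βY → μY βY < μY β) ∧
    μY βY = (1 - (2 : ℝ) ^ (-(n : ℝ))) * (1 + δ) * Real.sqrt (1 + ρ) := by
  set K := 1 / 2 * (1 - (2 : ℝ) ^ (-(n : ℝ))) * (1 + δ)
  have hc : 0 < 1 + ρ := by linarith
  have hK : 0 < K := by
    have := one_sub_two_rpow_neg_pos hn
    have : 0 < 1 + δ := by linarith
    positivity
  have hμY' : ∀ β, μY β = K * ((tan β)⁻¹ + (1 + ρ) * tan β) := fun β => by
    rw [hμY, one_add_sq_div_self]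
    ring
  rw [one_div] at hβY
  subst hβY
  have hval : μY (arctan (√(1 + ρ))⁻¹) = K * (2 * √(1 + ρ)) := by
    rw [hμY', tan_arctan, inv_add_mul_inv_sqrt hc]
  refine ⟨arctan_mem_Ioo_zero_pi_div_two (by positivity), fun β hβ hne => ?_, by rw [hval]; ring⟩
  rw [hval, hμY']
  exact mul_lt_mul_of_pos_left (two_sqrt_lt_inv_tan_add_mul_tan hc hβ hne) hK
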